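/- The ℂ-linear span of { M_{(σ,τ)} : σ, τ ∈ Sₙ } has dimension (n−1)² over ℂ, and the (n−1)² matrices φ_{ij} (for 1 ≤ i, j ≤ n−1), where φ_{ij} has entry 1 at positions (i,j) and (n,n), entry −1 at positions (i,n) and (n,j), and 0 elsewhere, form a basis of this span. -/

import Mathlib

open Finset Matrix

noncomputable section

/-- The matrix `M₀` with `(M₀)_{a,b} = 1` if `b ≡ a+1 (mod n)`, `= −1` if `b ≡ a−1 (mod n)`,
and `0` otherwise. -/
def M0 (n : ℕ) [NeZero n] : Matrix (Fin n) (Fin n) ℂ :=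
  fun a b => if b = a + 1 then 1 else if b = a - 1 then -1 else 0

/-- The permutation matrix of `σ`: `P(σ)_{a,b} = 1` iff `b = σ(a)`. -/
def Pmat (n : ℕ) (σ : Equiv.Perm (Fin n)) : Matrix (Fin n) (Fin n) ℂ :=
  fun a b => if b = σ a then 1 else 0

/-- The matrix `M_{(σ,τ)} = P(σ)ᵀ · M₀ · P(τ)`. -/
def Mmat (n : ℕ) [NeZero n] (σ τ : Equiv.Perm (Fin n)) : Matrix (Fin n) (Fin n) ℂ :=
  (Pmat n σ)ᵀ * M0 n * Pmat n τ

/-- The matrix `φ_{ij}` (for `i, j` among the first `n−1` indices): entries `1` at `(i,j)` and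
`(n,n)`, entries `−1` at `(i,n)` and `(n,j)`, and `0` elsewhere (here the "`n`-th" index is the
last one, `0`-based `n−1`). -/
def phi (n : ℕ) [NeZero n] (i j : Fin (n - 1)) : Matrix (Fin n) (Fin n) ℂ :=
  Matrix.single (Fin.castLE (Nat.sub_le n 1) i) (Fin.castLE (Nat.sub_le n 1) j) 1
    + Matrix.single ⟨n - 1, Nat.sub_lt (NeZero.pos n) one_pos⟩
        ⟨n - 1, Nat.sub_lt (NeZero.pos n) one_pos⟩ 1
    - Matrix.single (Fin.castLE (Nat.sub_le n 1) i)
        ⟨n - 1, Nat.sub_lt (NeZero.pos n) one_pos⟩ 1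
    - Matrix.single ⟨n - 1, Nat.sub_lt (NeZero.pos n) one_pos⟩
        (Fin.castLE (Nat.sub_le n 1) j) 1


section Counting
variable {α : Type*} [DecidableEq α] [Fintype α]

variable {α : Type*} [DecidableEq α] [Fintype α]

omit [Fintype α] in
lemma exists_perm_two {a b c d : α} (hab : a ≠ b) (hcd : c ≠ d) :
    ∃ π : Equiv.Perm α, π a = c ∧ π b = d := by
  refine ⟨(Equiv.swap a c).trans (Equiv.swap ((Equiv.swap a c) b) d), ?_, ?_⟩
  · simp only [Equiv.trans_apply, Equiv.swap_apply_left]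
    apply Equiv.swap_apply_of_ne_of_ne
    · intro h
      apply hab
      have h2 := congrArg (Equiv.swap a c) h
      rw [Equiv.swap_apply_self, Equiv.swap_apply_right] at h2
      exact h2
    · exact hcd
  · simp only [Equiv.trans_apply, Equiv.swap_apply_left]

lemma card_fix_one (x : α) :
    Fintype.card {σ : Equiv.Perm α // ∀ a, ¬ a ≠ x → σ a = a}
      = Nat.factorial (Fintype.card α - 1) := by
  rw [← Fintype.card_congr (Equiv.Perm.subtypeEquivSubtypePerm (fun a : α => a ≠ x))]
  rw [Fintype.card_perm, Fintype.card_subtype]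
  congr 1
  rw [Finset.filter_ne', Finset.card_erase_of_mem (mem_univ x), Finset.card_univ]

lemma card_fix_two {x y : α} (hxy : x ≠ y) :
    Fintype.card {σ : Equiv.Perm α // ∀ a, ¬ (a ≠ x ∧ a ≠ y) → σ a = a}
      = Nat.factorial (Fintype.card α - 2) := by
  rw [← Fintype.card_congr (Equiv.Perm.subtypeEquivSubtypePerm (fun a : α => a ≠ x ∧ a ≠ y))]
  rw [Fintype.card_perm, Fintype.card_subtype]
  congr 1
  have h1 : Finset.filter (fun a : α => a ≠ x ∧ a ≠ y) univ = (univ.erase y).erase x := by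
    ext a; simp
  rw [h1, Finset.card_erase_of_mem, Finset.card_erase_of_mem (mem_univ y),
    Finset.card_univ, Nat.sub_sub]
  exact Finset.mem_erase.2 ⟨hxy, mem_univ x⟩

/-- general transport: filter {σ ∘ conditions} has same card as fix set -/
lemma card_filter_eq_of_perm {p q : Equiv.Perm α → Prop} [DecidablePred p] [DecidablePred q]
    (e : Equiv.Perm α) (he : ∀ σ, p σ ↔ q (σ.trans e)) :
    (univ.filter p).card = (univ.filter q).card := by
  apply Finset.card_bij (fun σ _ => σ.trans e)
  · intro σ hσ
    simp only [mem_filter, mem_univ, true_and] at hσ ⊢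
    exact (he σ).1 hσ
  · intro σ₁ _ σ₂ _ h
    have := congrArg (fun ρ : Equiv.Perm α => ρ.trans e.symm) h
    simpa [Equiv.trans_assoc, Equiv.self_trans_symm] using this
  · intro ρ hρ
    simp only [mem_filter, mem_univ, true_and] at hρ
    refine ⟨ρ.trans e.symm, mem_filter.2 ⟨mem_univ _, ?_⟩,
      by simp [Equiv.trans_assoc, Equiv.symm_trans_self]⟩
    rw [he]
    simpa [Equiv.trans_assoc, Equiv.symm_trans_self] using hρ

lemma card_cond_one (x y : α) :
    (univ.filter fun σ : Equiv.Perm α => σ x = y).card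
      = Nat.factorial (Fintype.card α - 1) := by
  rw [← card_fix_one (x := x), Fintype.card_subtype]
  apply card_filter_eq_of_perm (Equiv.swap x y)
  intro σ
  constructor
  · intro h a ha
    simp only [ne_eq, not_not] at ha
    subst ha
    simp [Equiv.trans_apply, h]
  · intro h
    have := h x (by simp)
    simp only [Equiv.trans_apply] at this
    have := congrArg (Equiv.swap x y) this
    rwa [Equiv.swap_apply_self, Equiv.swap_apply_left] at this

lemma card_cond_two {x₁ x₂ y₁ y₂ : α} (hx : x₁ ≠ x₂) (hy : y₁ ≠ y₂) :
    (univ.filter fun σ : Equiv.Perm α => σ x₁ = y₁ ∧ σ x₂ = y₂).card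
      = Nat.factorial (Fintype.card α - 2) := by
  obtain ⟨π, hπ1, hπ2⟩ := exists_perm_two hy hx
  rw [← card_fix_two hx, Fintype.card_subtype]
  apply card_filter_eq_of_perm π
  intro σ
  constructor
  · intro ⟨h1, h2⟩ a ha
    simp only [ne_eq, not_and, not_not] at ha
    by_cases hax : a = x₁
    · subst hax; simp [Equiv.trans_apply, h1, hπ1]
    · rw [ha hax]; simp [Equiv.trans_apply, h2, hπ2]
  · intro h
    have e1 := h x₁ (by simp)
    have e2 := h x₂ (by simp [hx.symm])
    simp only [Equiv.trans_apply] at e1 e2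
    constructor
    · apply π.injective; rw [e1, hπ1]
    · apply π.injective; rw [e2, hπ2]

end Counting

lemma ite_and_mul (P Q : Prop) [Decidable P] [Decidable Q] :
    (if P ∧ Q then (1:ℂ) else 0) = (if P then 1 else 0) * (if Q then 1 else 0) := by
  by_cases hP : P <;> by_cases hQ : Q <;> simp [hP, hQ]

lemma ite_flip {α : Type*} (x y : α) [Decidable (x = y)] [Decidable (y = x)] :
    (if x = y then (1:ℂ) else 0) = if y = x then 1 else 0 := by
  by_cases h : x = y
  · simp [h]
  · rw [if_neg h, if_neg (fun hh : y = x => h hh.symm)]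


variable (m : ℕ)


lemma fin_two_ne_zero : (1 : Fin (m+3)) + 1 ≠ 0 := by
  intro h
  have h2 := congrArg Fin.val h
  rw [Fin.val_add, Fin.val_one, Fin.val_zero, Nat.mod_eq_of_lt (by omega)] at h2
  omega

lemma add_one_ne_sub_one (c : Fin (m+3)) : c + 1 ≠ c - 1 := by
  intro h
  apply fin_two_ne_zero m
  have : c + 1 + 1 = c - 1 + 1 := by rw [h]
  rw [sub_add_cancel] at this
  have h2 : c + (1 + 1) = c + 0 := by rw [← add_assoc, this, add_zero]
  exact add_left_cancel h2

lemma M0_apply (c b : Fin (m+3)) :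
    M0 (m+3) c b = (if b = c + 1 then 1 else 0) - (if b = c - 1 then 1 else 0) := by
  unfold M0
  split_ifs with h1 h2
  · exact absurd (h1 ▸ h2) (add_one_ne_sub_one m c)
  · ring
  · ring
  · ring

lemma Mmat_apply (σ τ : Equiv.Perm (Fin (m+3))) (a b : Fin (m+3)) :
    Mmat (m+3) σ τ a b = M0 (m+3) (σ⁻¹ a) (τ⁻¹ b) := by
  simp only [Mmat, Matrix.mul_apply, Matrix.transpose_apply, Pmat]
  rw [Finset.sum_eq_single (τ⁻¹ b)]
  · rw [Finset.sum_eq_single (σ⁻¹ a)]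
    · simp
    · intro c _ hc
      have : a ≠ σ c := fun h => hc (by rw [h]; simp)
      simp [this]
    · simp
  · intro d _ hd
    have : b ≠ τ d := fun h => hd (by rw [h]; simp)
    simp [this]
  · simp

-- row and column sums of M0
lemma M0_row_sum (c : Fin (m+3)) : ∑ b, M0 (m+3) c b = 0 := by
  simp only [M0_apply]
  rw [Finset.sum_sub_distrib]
  simp

lemma M0_col_sum (b : Fin (m+3)) : ∑ c, M0 (m+3) c b = 0 := by
  simp only [M0_apply]
  rw [Finset.sum_sub_distrib]
  have h1 : ∑ c : Fin (m+3), (if b = c + 1 then (1:ℂ) else 0) = 1 := by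
    rw [← Equiv.sum_comp (Equiv.subRight (1 : Fin (m+3)))]
    simp [Equiv.subRight, sub_add_cancel]
  have h2 : ∑ c : Fin (m+3), (if b = c - 1 then (1:ℂ) else 0) = 1 := by
    rw [← Equiv.sum_comp (Equiv.addRight (1 : Fin (m+3)))]
    simp [Equiv.addRight, add_sub_cancel_right]
  rw [h1, h2, sub_self]

lemma Mmat_row_sum (σ τ : Equiv.Perm (Fin (m+3))) (a : Fin (m+3)) :
    ∑ b, Mmat (m+3) σ τ a b = 0 := by
  simp only [Mmat_apply]
  rw [Equiv.sum_comp (τ⁻¹ : Equiv.Perm (Fin (m+3))) (fun d => M0 (m+3) (σ⁻¹ a) d)]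
  exact M0_row_sum m _

lemma Mmat_col_sum (σ τ : Equiv.Perm (Fin (m+3))) (b : Fin (m+3)) :
    ∑ a, Mmat (m+3) σ τ a b = 0 := by
  simp only [Mmat_apply]
  rw [Equiv.sum_comp (σ⁻¹ : Equiv.Perm (Fin (m+3))) (fun c => M0 (m+3) c (τ⁻¹ b))]
  exact M0_col_sum m _


lemma stepA (σ τ : Equiv.Perm (Fin (m+3))) (a b : Fin (m+3)) :
    Mmat (m+3) σ τ a b
      = ∑ c, (if σ c = a then (1:ℂ) else 0)
          * ∑ d, (if τ d = b then (1:ℂ) else 0) * M0 (m+3) c d := by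
  rw [Mmat_apply]
  rw [Finset.sum_eq_single (σ⁻¹ a)]
  · rw [Finset.sum_eq_single (τ⁻¹ b)]
    · simp
    · intro d _ hd
      have : ¬ τ d = b := fun h => hd (by rw [← h]; simp)
      simp [this]
    · simp
  · intro c _ hc
    have : ¬ σ c = a := fun h => hc (by rw [← h]; simp)
    simp [this]
  · simp

lemma sum_boole' (p q : Equiv.Perm (Fin (m+3)) → Prop) [DecidablePred p] [DecidablePred q] :
    ∑ σ ∈ univ.filter p, (if q σ then (1:ℂ) else 0)
      = ((univ.filter fun σ => p σ ∧ q σ).card : ℂ) := by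
  rw [Finset.sum_boole, Finset.filter_filter]

def Ssum (r s : Fin (m+3)) : Matrix (Fin (m+3)) (Fin (m+3)) ℂ :=
  ∑ σ ∈ univ.filter (fun σ : Equiv.Perm (Fin (m+3)) => σ 0 = r),
    ∑ τ ∈ univ.filter (fun τ : Equiv.Perm (Fin (m+3)) => τ 1 = s), Mmat (m+3) σ τ

lemma stepB (r s : Fin (m+3)) (a b : Fin (m+3)) :
    Ssum m r s a b
      = ∑ c, ((univ.filter (fun σ : Equiv.Perm (Fin (m+3)) => σ 0 = r ∧ σ c = a)).card : ℂ)
          * ∑ d, ((univ.filter (fun τ : Equiv.Perm (Fin (m+3)) => τ 1 = s ∧ τ d = b)).card : ℂ)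
              * M0 (m+3) c d := by
  unfold Ssum
  simp only [Matrix.sum_apply]
  have h1 : ∀ σ ∈ univ.filter (fun σ : Equiv.Perm (Fin (m+3)) => σ 0 = r),
      ∑ τ ∈ univ.filter (fun τ : Equiv.Perm (Fin (m+3)) => τ 1 = s), Mmat (m+3) σ τ a b
        = ∑ c, ∑ τ ∈ univ.filter (fun τ : Equiv.Perm (Fin (m+3)) => τ 1 = s),
            (if σ c = a then (1:ℂ) else 0)
              * ∑ d, (if τ d = b then (1:ℂ) else 0) * M0 (m+3) c d := by
    intro σ _
    rw [← Finset.sum_comm]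
    exact Finset.sum_congr rfl fun τ _ => stepA m σ τ a b
  rw [Finset.sum_congr rfl h1, Finset.sum_comm]
  refine Finset.sum_congr rfl fun c _ => ?_
  have h2 : ∀ σ : Equiv.Perm (Fin (m+3)),
      ∑ τ ∈ univ.filter (fun τ : Equiv.Perm (Fin (m+3)) => τ 1 = s),
        (if σ c = a then (1:ℂ) else 0)
          * ∑ d, (if τ d = b then (1:ℂ) else 0) * M0 (m+3) c d
      = (if σ c = a then (1:ℂ) else 0) *
          ∑ τ ∈ univ.filter (fun τ : Equiv.Perm (Fin (m+3)) => τ 1 = s),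
            ∑ d, (if τ d = b then (1:ℂ) else 0) * M0 (m+3) c d :=
    fun σ => (Finset.mul_sum _ _ _).symm
  rw [Finset.sum_congr rfl fun σ _ => h2 σ, ← Finset.sum_mul, sum_boole']
  congr 1
  rw [← Finset.sum_comm]
  refine Finset.sum_congr rfl fun d _ => ?_
  rw [← Finset.sum_mul, sum_boole']

lemma Fcard (x r c a : Fin (m+3)) :
    ((univ.filter (fun σ : Equiv.Perm (Fin (m+3)) => σ x = r ∧ σ c = a)).card : ℂ)
      = if c = x then (if a = r then (Nat.factorial (m+2) : ℂ) else 0)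
        else (if a = r then 0 else (Nat.factorial (m+1) : ℂ)) := by
  by_cases hc : c = x
  · subst hc
    by_cases har : a = r
    · subst har
      simp only [if_pos rfl, and_self]
      rw [card_cond_one]
      simp [Fintype.card_fin]
    · have : (univ.filter (fun σ : Equiv.Perm (Fin (m+3)) => σ c = r ∧ σ c = a)) = ∅ := by
        apply Finset.filter_false_of_mem
        rintro σ _ ⟨h1, h2⟩
        exact har (h2 ▸ h1 ▸ rfl : a = r)
      rw [this]
      simp [har]
  · by_cases har : a = r
    · subst har
      have : (univ.filter (fun σ : Equiv.Perm (Fin (m+3)) => σ x = a ∧ σ c = a)) = ∅ := by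
        apply Finset.filter_false_of_mem
        rintro σ _ ⟨h1, h2⟩
        exact hc (σ.injective (h2.trans h1.symm))
      rw [this]
      simp [hc]
    · rw [card_cond_two (fun h => hc h.symm) (fun h => har h.symm)]
      simp [Fintype.card_fin, hc, har]

lemma zero_sub_one_ne_one : (0 : Fin (m+3)) - 1 ≠ 1 := by
  intro h
  rw [sub_eq_iff_eq_add] at h
  have h2 := congrArg Fin.val h
  rw [Fin.val_add, Fin.val_one, Fin.val_zero, Nat.mod_eq_of_lt (by omega)] at h2
  omega

lemma Ssum_apply (r s a b : Fin (m+3)) :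
    Ssum m r s a b
      = (((if a = r then ((m+3):ℂ) else 0) - 1) * ((if b = s then ((m+3):ℂ) else 0) - 1))
          * ((Nat.factorial (m+1) : ℂ))^2 := by
  set g : Fin (m+3) → ℂ := fun d =>
    if d = 1 then (if b = s then (Nat.factorial (m+2) : ℂ) else 0)
    else (if b = s then 0 else (Nat.factorial (m+1) : ℂ)) with hg
  set A : ℂ := if a = r then 0 else (Nat.factorial (m+1) : ℂ) with hA
  set Δ : ℂ := if a = r then (Nat.factorial (m+2) : ℂ) else -(Nat.factorial (m+1) : ℂ) with hΔ
  rw [stepB]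
  have hinner : ∀ c : Fin (m+3),
      ∑ d, ((univ.filter (fun τ : Equiv.Perm (Fin (m+3)) => τ 1 = s ∧ τ d = b)).card : ℂ)
          * M0 (m+3) c d = g (c+1) - g (c-1) := by
    intro c
    have : ∀ d : Fin (m+3),
        ((univ.filter (fun τ : Equiv.Perm (Fin (m+3)) => τ 1 = s ∧ τ d = b)).card : ℂ)
          * M0 (m+3) c d
        = (if d = c + 1 then g d else 0) - (if d = c - 1 then g d else 0) := by
      intro d
      rw [Fcard, M0_apply]
      simp only [hg]
      split_ifs <;> ring
    rw [Finset.sum_congr rfl fun d _ => this d, Finset.sum_sub_distrib,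
      Finset.sum_ite_eq' univ (c+1) g, Finset.sum_ite_eq' univ (c-1) g]
    simp
  rw [Finset.sum_congr rfl fun c _ => by rw [hinner c]]
  have hF : ∀ c : Fin (m+3),
      ((univ.filter (fun σ : Equiv.Perm (Fin (m+3)) => σ 0 = r ∧ σ c = a)).card : ℂ)
        = A + (if c = 0 then Δ else 0) := by
    intro c
    rw [Fcard]
    simp only [hA, hΔ]
    split_ifs <;> ring
  rw [Finset.sum_congr rfl fun c _ => by rw [hF c]]
  have expand : ∀ c : Fin (m+3),
      (A + (if c = 0 then Δ else 0)) * (g (c+1) - g (c-1))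
        = A * (g (c+1) - g (c-1)) + (if c = 0 then Δ * (g (c+1) - g (c-1)) else 0) := by
    intro c; split_ifs <;> ring
  rw [Finset.sum_congr rfl fun c _ => expand c, Finset.sum_add_distrib]
  have hshift1 : ∑ c : Fin (m+3), g (c + 1) = ∑ c, g c :=
    Fintype.sum_equiv (Equiv.addRight (1 : Fin (m+3))) _ _ (fun c => by simp [Equiv.addRight])
  have hshift2 : ∑ c : Fin (m+3), g (c - 1) = ∑ c, g c :=
    Fintype.sum_equiv (Equiv.subRight (1 : Fin (m+3))) _ _ (fun c => by simp [Equiv.subRight])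
  have hzero : ∑ c : Fin (m+3), A * (g (c+1) - g (c-1)) = 0 := by
    rw [← Finset.mul_sum, Finset.sum_sub_distrib, hshift1, hshift2, sub_self, mul_zero]
  rw [hzero, zero_add, Finset.sum_ite_eq' univ (0 : Fin (m+3))]
  simp only [mem_univ, if_true, zero_add]
  have hg1 : g (1 : Fin (m+3)) = if b = s then (Nat.factorial (m+2) : ℂ) else 0 := by
    rw [hg]; simp
  have hg2 : g ((0:Fin (m+3)) - 1) = if b = s then 0 else (Nat.factorial (m+1) : ℂ) := by
    rw [hg]; simp only [if_neg (zero_sub_one_ne_one m)]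
  rw [hg1, hg2, hΔ]
  have hfact : (Nat.factorial (m+2) : ℂ) = (m+2) * Nat.factorial (m+1) := by
    rw [Nat.factorial_succ]; push_cast; ring
  split_ifs <;> (try simp only [hfact]) <;> push_cast <;> ring


lemma phi_apply (i j : Fin (m+2)) (a b : Fin (m+3)) :
    phi (m+3) i j a b
      = ((if a = Fin.castSucc i then (1:ℂ) else 0) - (if a = Fin.last (m+2) then 1 else 0))
        * ((if b = Fin.castSucc j then (1:ℂ) else 0) - (if b = Fin.last (m+2) then 1 else 0)) := by
  have hi : (Fin.castLE (Nat.sub_le (m+3) 1) i : Fin (m+3)) = Fin.castSucc i := rfl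
  have hj : (Fin.castLE (Nat.sub_le (m+3) 1) j : Fin (m+3)) = Fin.castSucc j := rfl
  have hl : (⟨m+3-1, Nat.sub_lt (NeZero.pos (m+3)) one_pos⟩ : Fin (m+3)) = Fin.last (m+2) := rfl
  simp only [phi, Matrix.sub_apply, Matrix.add_apply, Matrix.single, Matrix.of_apply,
    hi, hj, hl, ite_and_mul, ite_flip]
  ring

lemma castSucc_ne_last' (i : Fin (m+2)) : (Fin.castSucc i : Fin (m+3)) ≠ Fin.last (m+2) :=
  Fin.ne_of_lt (Fin.castSucc_lt_last i)

lemma sum_smul_phi_apply (c : Fin (m+2) → Fin (m+2) → ℂ) (a b : Fin (m+3)) :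
    (∑ p : Fin (m+2) × Fin (m+2), c p.1 p.2 • phi (m+3) p.1 p.2) a b
      = ∑ i, ∑ j, c i j *
          ((((if a = Fin.castSucc i then (1:ℂ) else 0) - if a = Fin.last (m+2) then 1 else 0)) *
           (((if b = Fin.castSucc j then (1:ℂ) else 0) - if b = Fin.last (m+2) then 1 else 0))) := by
  simp only [Matrix.sum_apply, Matrix.smul_apply, phi_apply, smul_eq_mul]
  rw [Fintype.sum_prod_type]

lemma eval_cc (c : Fin (m+2) → Fin (m+2) → ℂ) (i j : Fin (m+2)) :
    (∑ p : Fin (m+2) × Fin (m+2), c p.1 p.2 • phi (m+3) p.1 p.2)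
        (Fin.castSucc i) (Fin.castSucc j) = c i j := by
  rw [sum_smul_phi_apply]
  have step : ∀ i' j' : Fin (m+2),
      c i' j' *
        ((((if (Fin.castSucc i : Fin (m+3)) = Fin.castSucc i' then (1:ℂ) else 0)
            - if (Fin.castSucc i : Fin (m+3)) = Fin.last (m+2) then 1 else 0)) *
         (((if (Fin.castSucc j : Fin (m+3)) = Fin.castSucc j' then (1:ℂ) else 0)
            - if (Fin.castSucc j : Fin (m+3)) = Fin.last (m+2) then 1 else 0)))
      = if j = j' then (if i = i' then c i' j' else 0) else 0 := by
    intro i' j'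
    rw [if_neg (castSucc_ne_last' m i), if_neg (castSucc_ne_last' m j), sub_zero, sub_zero,
      if_congr (Fin.castSucc_inj (a := i) (b := i')) rfl rfl,
      if_congr (Fin.castSucc_inj (a := j) (b := j')) rfl rfl]
    split_ifs <;> ring
  rw [Finset.sum_congr rfl fun i' _ => Finset.sum_congr rfl fun j' _ => step i' j']
  simp only [Finset.sum_ite_eq, Finset.mem_univ, if_true]

lemma eval_lc (c : Fin (m+2) → Fin (m+2) → ℂ) (j : Fin (m+2)) :
    (∑ p : Fin (m+2) × Fin (m+2), c p.1 p.2 • phi (m+3) p.1 p.2)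
        (Fin.last (m+2)) (Fin.castSucc j) = -∑ i, c i j := by
  rw [sum_smul_phi_apply]
  have step : ∀ i' j' : Fin (m+2),
      c i' j' *
        ((((if (Fin.last (m+2) : Fin (m+3)) = Fin.castSucc i' then (1:ℂ) else 0)
            - if (Fin.last (m+2) : Fin (m+3)) = Fin.last (m+2) then 1 else 0)) *
         (((if (Fin.castSucc j : Fin (m+3)) = Fin.castSucc j' then (1:ℂ) else 0)
            - if (Fin.castSucc j : Fin (m+3)) = Fin.last (m+2) then 1 else 0)))
      = if j = j' then -c i' j' else 0 := by
    intro i' j'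
    rw [if_neg (Ne.symm (castSucc_ne_last' m i')), if_pos rfl,
      if_neg (castSucc_ne_last' m j), sub_zero,
      if_congr (Fin.castSucc_inj (a := j) (b := j')) rfl rfl]
    split_ifs <;> ring
  rw [Finset.sum_congr rfl fun i' _ => Finset.sum_congr rfl fun j' _ => step i' j']
  simp only [Finset.sum_ite_eq, Finset.mem_univ, if_true]
  rw [← Finset.sum_neg_distrib]

lemma eval_cl (c : Fin (m+2) → Fin (m+2) → ℂ) (i : Fin (m+2)) :
    (∑ p : Fin (m+2) × Fin (m+2), c p.1 p.2 • phi (m+3) p.1 p.2)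
        (Fin.castSucc i) (Fin.last (m+2)) = -∑ j, c i j := by
  rw [sum_smul_phi_apply]
  have step : ∀ i' j' : Fin (m+2),
      c i' j' *
        ((((if (Fin.castSucc i : Fin (m+3)) = Fin.castSucc i' then (1:ℂ) else 0)
            - if (Fin.castSucc i : Fin (m+3)) = Fin.last (m+2) then 1 else 0)) *
         (((if (Fin.last (m+2) : Fin (m+3)) = Fin.castSucc j' then (1:ℂ) else 0)
            - if (Fin.last (m+2) : Fin (m+3)) = Fin.last (m+2) then 1 else 0)))
      = if i = i' then -c i' j' else 0 := by
    intro i' j'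
    rw [if_neg (Ne.symm (castSucc_ne_last' m j')), if_pos rfl,
      if_neg (castSucc_ne_last' m i), sub_zero,
      if_congr (Fin.castSucc_inj (a := i) (b := i')) rfl rfl]
    split_ifs <;> ring
  rw [Finset.sum_congr rfl fun i' _ => Finset.sum_congr rfl fun j' _ => step i' j']
  have inner : ∀ i' : Fin (m+2),
      ∑ j', (if i = i' then -c i' j' else 0) = if i = i' then -∑ j', c i' j' else 0 := by
    intro i'
    split_ifs with h
    · rw [← Finset.sum_neg_distrib]
    · simp
  rw [Finset.sum_congr rfl fun i' _ => inner i']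
  simp only [Finset.sum_ite_eq, Finset.mem_univ, if_true]

lemma eval_ll (c : Fin (m+2) → Fin (m+2) → ℂ) :
    (∑ p : Fin (m+2) × Fin (m+2), c p.1 p.2 • phi (m+3) p.1 p.2)
        (Fin.last (m+2)) (Fin.last (m+2)) = ∑ i, ∑ j, c i j := by
  rw [sum_smul_phi_apply]
  refine Finset.sum_congr rfl fun i' _ => Finset.sum_congr rfl fun j' _ => ?_
  rw [if_neg (Ne.symm (castSucc_ne_last' m i')), if_neg (Ne.symm (castSucc_ne_last' m j')),
    if_pos rfl]
  ring

lemma matrix_expand (A : Matrix (Fin (m+3)) (Fin (m+3)) ℂ)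
    (hrow : ∀ a, ∑ b, A a b = 0) (hcol : ∀ b, ∑ a, A a b = 0) :
    A = ∑ p : Fin (m+2) × Fin (m+2),
        A (Fin.castSucc p.1) (Fin.castSucc p.2) • phi (m+3) p.1 p.2 := by
  have rowfact : ∀ x, ∑ j : Fin (m+2), A x (Fin.castSucc j) = -A x (Fin.last (m+2)) := by
    intro x
    have h := hrow x
    rw [Fin.sum_univ_castSucc] at h
    exact eq_neg_of_add_eq_zero_left h
  have colfact : ∀ y, ∑ i : Fin (m+2), A (Fin.castSucc i) y = -A (Fin.last (m+2)) y := by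
    intro y
    have h := hcol y
    rw [Fin.sum_univ_castSucc] at h
    exact eq_neg_of_add_eq_zero_left h
  ext a b
  induction a using Fin.lastCases with
  | last =>
    induction b using Fin.lastCases with
    | last =>
      refine Eq.trans ?_ (eval_ll m (fun x y => A x.castSucc y.castSucc)).symm
      show A _ _ = ∑ i : Fin (m+2), ∑ j : Fin (m+2), A i.castSucc j.castSucc
      rw [Finset.sum_congr rfl fun i _ => rowfact (Fin.castSucc i), Finset.sum_neg_distrib,
        colfact, neg_neg]
    | cast b' =>
      refine Eq.trans ?_ (eval_lc m (fun x y => A x.castSucc y.castSucc) b').symm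
      show A _ _ = -∑ i : Fin (m+2), A i.castSucc b'.castSucc
      rw [colfact, neg_neg]
  | cast a' =>
    induction b using Fin.lastCases with
    | last =>
      refine Eq.trans ?_ (eval_cl m (fun x y => A x.castSucc y.castSucc) a').symm
      show A _ _ = -∑ j : Fin (m+2), A a'.castSucc j.castSucc
      rw [rowfact, neg_neg]
    | cast b' =>
      exact (eval_cc m (fun x y => A x.castSucc y.castSucc) a' b').symm


lemma phi_mem (i j : Fin (m+2)) :
    phi (m+3) i j ∈ Submodule.span ℂ {A : Matrix (Fin (m+3)) (Fin (m+3)) ℂ |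
      ∃ σ τ : Equiv.Perm (Fin (m+3)), A = Mmat (m+3) σ τ} := by
  have hS : ∀ r s : Fin (m+3), Ssum m r s ∈ Submodule.span ℂ
      {A : Matrix (Fin (m+3)) (Fin (m+3)) ℂ |
        ∃ σ τ : Equiv.Perm (Fin (m+3)), A = Mmat (m+3) σ τ} := by
    intro r s
    exact Submodule.sum_mem _ fun σ _ => Submodule.sum_mem _ fun τ _ =>
      Submodule.subset_span ⟨σ, τ, rfl⟩
  have hne1 : ((m:ℂ) + 3) ≠ 0 := by
    intro h
    have : ((m:ℂ) + 3) = ((m + 3 : ℕ) : ℂ) := by push_cast; ring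
    rw [this] at h
    exact (Nat.cast_ne_zero (R := ℂ)).2 (by omega) h
  have hfac : ((Nat.factorial (m+1) : ℂ)) ≠ 0 :=
    Nat.cast_ne_zero.mpr (Nat.factorial_ne_zero _)
  have key : phi (m+3) i j = (((m:ℂ)+3)^2 * ((Nat.factorial (m+1) : ℂ))^2)⁻¹ •
      (Ssum m (Fin.castSucc i) (Fin.castSucc j) - Ssum m (Fin.castSucc i) (Fin.last (m+2))
        - Ssum m (Fin.last (m+2)) (Fin.castSucc j) + Ssum m (Fin.last (m+2)) (Fin.last (m+2))) := by
    ext a b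
    simp only [Matrix.smul_apply, Matrix.sub_apply, Matrix.add_apply, Ssum_apply, phi_apply,
      smul_eq_mul]
    split_ifs <;> field_simp <;> ring
  rw [key]
  exact Submodule.smul_mem _ _ (Submodule.add_mem _ (Submodule.sub_mem _
    (Submodule.sub_mem _ (hS _ _) (hS _ _)) (hS _ _)) (hS _ _))

/-- The span of the `M_{(σ,τ)}` has dimension `(n−1)²`, and the `(n−1)²` matrices `φ_{ij}`
form a basis of this span. -/
theorem statement14 (n : ℕ) [NeZero n] (hn : 3 ≤ n) :
    LinearIndependent ℂ (fun p : Fin (n - 1) × Fin (n - 1) => phi n p.1 p.2) ∧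
    Submodule.span ℂ (Set.range fun p : Fin (n - 1) × Fin (n - 1) => phi n p.1 p.2) =
      Submodule.span ℂ {A : Matrix (Fin n) (Fin n) ℂ |
        ∃ σ τ : Equiv.Perm (Fin n), A = Mmat n σ τ} ∧
    Module.finrank ℂ
      (Submodule.span ℂ {A : Matrix (Fin n) (Fin n) ℂ |
        ∃ σ τ : Equiv.Perm (Fin n), A = Mmat n σ τ}) = (n - 1) ^ 2 := by
  obtain ⟨m, rfl⟩ : ∃ m, n = m + 3 := ⟨n - 3, by omega⟩
  have hind : LinearIndependent ℂ
      (fun p : Fin (m + 3 - 1) × Fin (m + 3 - 1) => phi (m+3) p.1 p.2) := by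
    rw [Fintype.linearIndependent_iff]
    intro g hg p
    have h2 := eval_cc m (fun x y => g (x, y)) p.1 p.2
    rw [show (∑ q : Fin (m+2) × Fin (m+2), (fun x y => g (x,y)) q.1 q.2 • phi (m+3) q.1 q.2)
        = 0 from hg] at h2
    rw [Matrix.zero_apply] at h2
    exact h2.symm
  have hspan : Submodule.span ℂ
        (Set.range fun p : Fin (m + 3 - 1) × Fin (m + 3 - 1) => phi (m+3) p.1 p.2)
      = Submodule.span ℂ {A : Matrix (Fin (m+3)) (Fin (m+3)) ℂ |
          ∃ σ τ : Equiv.Perm (Fin (m+3)), A = Mmat (m+3) σ τ} := by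
    apply le_antisymm
    · rw [Submodule.span_le]
      rintro _ ⟨p, rfl⟩
      exact phi_mem m p.1 p.2
    · rw [Submodule.span_le]
      rintro A ⟨σ, τ, rfl⟩
      rw [matrix_expand m (Mmat (m+3) σ τ) (Mmat_row_sum m σ τ) (Mmat_col_sum m σ τ)]
      exact Submodule.sum_mem _ fun p _ =>
        Submodule.smul_mem _ _ (Submodule.subset_span (Set.mem_range_self p))
  refine ⟨hind, hspan, ?_⟩
  rw [← hspan, finrank_span_eq_card hind, Fintype.card_prod, Fintype.card_fin, pow_two]
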